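/- arXiv:2002.11332 — 5 statements merged into one kernel-verified Lean document; each statement's English description precedes it below -/
import Mathlib

section
/- Multi-parameter regret decomposition (Lemma 4). Let p, k, T be positive integers, for each round t ∈ {1,…,T} and arm i ∈ {1,…,k} let x_i^t ∈ ℝ^p, and for each arm i let θ*_i ∈ ℝ^p. For each arm i and round t let e_i(t) ∈ {1,…,e_{i,max}} be the episode index of arm i at round t, and for each arm i and episode e let θ̂_i^{(e)} ∈ ℝ^p be an estimate. Suppose the arm i^t chosen in round t satisfies ⟨x_{i^t}^t, θ̂_{i^t}^{(e_{i^t}(t))}⟩ = max_{1≤i≤k} ⟨x_i^t, θ̂_i^{(e_i(t))}⟩, and let i*(t) be an index achieving max_{1≤i≤k} ⟨x_i^t, θ*_i⟩. Fix an integer t_min with 0 ≤ t_min ≤ T and define, for each arm i and episode e, T_{i,e} = #{t > t_min : i^t = i and e_i(t) = e} and T*_{i,e} = #{t > t_min : i*(t) = i, i^t ≠ i, and e_i(t) = e}. Let β ≥ 0 satisfy |⟨x_i^t, θ*_j⟩| ≤ β for all i, j, t and |⟨x_i^t, θ*_i − θ̂_i^{(e)}⟩| ≤ β‖θ*_i −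 θ̂_i^{(e)}‖₂ for all i, t, e. Then the regret Reg(T) = Σ_{t=1}^T ( ⟨x_{i*(t)}^t, θ*_{i*(t)}⟩ − ⟨x_{i^t}^t, θ*_{i^t}⟩ ) satisfies Reg(T) ≤ 2β·t_min + β·Σ_{i=1}^k Σ_{e=1}^{e_{i,max}} ( T_{i,e} + T*_{i,e} )·‖θ*_i − θ̂_i^{(e)}‖₂. -/
open scoped RealInnerProductSpace
open Finset

/-!
In a round `t` after `tmin` with chosen arm `a` and optimal arm `b`, split the regret as
`⟪x_b, θ*_b - θ̂_b⟫ + (⟪x_b, θ̂_b⟫ - ⟪x_a, θ̂_a⟫) + ⟪x_a, θ̂_a - θ*_a⟫`. The greedy choice makes the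
middle term nonpositive and the outer terms are at most `β ‖θ* - θ̂‖` for the current episode;
when `b = a` the regret is `0` and only the chosen arm's term is charged. Summing over rounds and
grouping them by (arm, episode) turns these charges into `T_{i,e}` and `T*_{i,e}`. Each of the
first `tmin` rounds costs at most `2β`.
-/

theorem Finset.sum_comp_eq_sum_card_filter_nsmul {α ι κ M : Type*} [Fintype ι] [DecidableEq ι]
    [DecidableEq κ] [AddCommMonoid M] (s : Finset α) (arm : α → ι) (ep : ι → α → κ)
    (E : ι → Finset κ) (w : ι → κ → M) (hep : ∀ t ∈ s, ep (arm t) t ∈ E (arm t)) :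
    ∑ t ∈ s, w (arm t) (ep (arm t) t) =
      ∑ i, ∑ e ∈ E i, #{t ∈ s | arm t = i ∧ ep i t = e} • w i e := by
  rw [← sum_fiberwise s arm]
  refine sum_congr rfl fun i _ => ?_
  have hmaps : ∀ t ∈ s.filter (arm · = i), ep i t ∈ E i := by
    rintro t ht
    obtain ⟨hts, rfl⟩ := mem_filter.1 ht
    exact hep t hts
  rw [sum_congr rfl fun t ht => by rw [(mem_filter.1 ht).2], ← sum_fiberwise_of_maps_to' hmaps]
  simp only [sum_const, filter_filter]

theorem sum_add_ite_ne_eq_sum_card_mul {α ι κ R : Type*} [Fintype ι] [DecidableEq ι]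
    [DecidableEq κ] [Semiring R] (s : Finset α) (a b : α → ι) (ep : ι → α → κ)
    (E : ι → Finset κ) (w : ι → κ → R) (hep : ∀ i, ∀ t ∈ s, ep i t ∈ E i) :
    ∑ t ∈ s, (w (a t) (ep (a t) t) + if b t ≠ a t then w (b t) (ep (b t) t) else 0) =
      ∑ i, ∑ e ∈ E i,
        (#{t ∈ s | a t = i ∧ ep i t = e} + #{t ∈ s | b t = i ∧ a t ≠ i ∧ ep i t = e} : R) *
          w i e := by
  rw [sum_add_distrib, ← sum_filter,
    sum_comp_eq_sum_card_filter_nsmul s a ep E w fun t ht => hep _ t ht,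
    sum_comp_eq_sum_card_filter_nsmul _ b ep E w fun t ht => hep _ t (mem_filter.1 ht).1]
  simp only [filter_filter, nsmul_eq_mul, add_mul, ← sum_add_distrib]
  refine sum_congr rfl fun i _ => sum_congr rfl fun e _ => ?_
  congr 4
  exact filter_congr fun t _ => by grind

theorem greedy_regret_le {E ι : Type*} [NormedAddCommGroup E] [InnerProductSpace ℝ E]
    [DecidableEq ι] {β : ℝ} (x θ θhat : ι → E) {a b : ι}
    (hgreedy : ⟪x b, θhat b⟫ ≤ ⟪x a, θhat a⟫)
    (herr : ∀ i, |⟪x i, θ i - θhat i⟫| ≤ β * ‖θ i - θhat i‖) :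
    ⟪x b, θ b⟫ - ⟪x a, θ a⟫ ≤
      β * (‖θ a - θhat a‖ + if b ≠ a then ‖θ b - θhat b‖ else 0) := by
  split_ifs with hba
  · have ha := abs_le.1 (herr a)
    have hb := abs_le.1 (herr b)
    rw [inner_sub_right] at ha hb
    linarith
  · rw [not_not.1 hba, sub_self, add_zero]
    exact (abs_nonneg _).trans (herr a)

theorem multi_parameter_regret_decomposition_general
    (p k T : ℕ) (hk : 0 < k)
    (x : Fin k → ℕ → EuclideanSpace ℝ (Fin p))
    (θstar : Fin k → EuclideanSpace ℝ (Fin p))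
    (emax : Fin k → ℕ)
    (ei : Fin k → ℕ → ℕ)
    (hei : ∀ (i : Fin k) (t : ℕ), 1 ≤ t → t ≤ T → ei i t ∈ Finset.Icc 1 (emax i))
    (θhat : Fin k → ℕ → EuclideanSpace ℝ (Fin p))
    (it : ℕ → Fin k)
    (hgreedy : ∀ t : ℕ, 1 ≤ t → t ≤ T →
      ⟪x (it t) t, θhat (it t) (ei (it t) t)⟫ =
        Finset.univ.sup' (Finset.univ_nonempty_iff.mpr ⟨⟨0, hk⟩⟩)
          (fun i : Fin k => ⟪x i t, θhat i (ei i t)⟫))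
    (istar : ℕ → Fin k)
    (tmin : ℕ) (htmin : tmin ≤ T)
    (β : ℝ)
    (hx1 : ∀ (i j : Fin k) (t : ℕ), 1 ≤ t → t ≤ T → |⟪x i t, θstar j⟫| ≤ β)
    (hx2 : ∀ (i : Fin k) (t e : ℕ), 1 ≤ t → t ≤ T →
      |⟪x i t, θstar i - θhat i e⟫| ≤ β * ‖θstar i - θhat i e‖) :
    (∑ t ∈ Finset.Icc 1 T,
        (⟪x (istar t) t, θstar (istar t)⟫ - ⟪x (it t) t, θstar (it t)⟫))
      ≤ 2 * β * (tmin : ℝ)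
        + β * ∑ i : Fin k, ∑ e ∈ Finset.Icc 1 (emax i),
            ((((Finset.Icc (tmin + 1) T).filter
                  (fun t => it t = i ∧ ei i t = e)).card
              + ((Finset.Icc (tmin + 1) T).filter
                  (fun t => istar t = i ∧ it t ≠ i ∧ ei i t = e)).card : ℝ))
              * ‖θstar i - θhat i e‖ := by
  set regret : ℕ → ℝ := fun t => ⟪x (istar t) t, θstar (istar t)⟫ - ⟪x (it t) t, θstar (it t)⟫
  set Δ : Fin k → ℕ → ℝ := fun i e => ‖θstar i - θhat i e‖
  have early : ∀ t ∈ Icc 1 tmin, regret t ≤ 2 * β := by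
    intro t ht
    obtain ⟨h1, h2⟩ := mem_Icc.1 ht
    have hopt := abs_le.1 (hx1 (istar t) (istar t) t h1 (h2.trans htmin))
    have hchosen := abs_le.1 (hx1 (it t) (it t) t h1 (h2.trans htmin))
    linarith [hopt.2, hchosen.1]
  have late : ∀ t ∈ Icc (tmin + 1) T, regret t ≤
      β * (Δ (it t) (ei (it t) t) +
        if istar t ≠ it t then Δ (istar t) (ei (istar t) t) else 0) := by
    intro t ht
    obtain ⟨h1, h2⟩ := mem_Icc.1 ht
    refine greedy_regret_le (fun i => x i t) θstar (fun i => θhat i (ei i t)) ?_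
      fun i => hx2 i t _ (by omega) h2
    exact (le_sup' (fun i => ⟪x i t, θhat i (ei i t)⟫) (mem_univ _)).trans_eq
      (hgreedy t (by omega) h2).symm
  have hepisode : ∀ i, ∀ t ∈ Icc (tmin + 1) T, ei i t ∈ Icc 1 (emax i) := by
    intro i t ht
    obtain ⟨h1, h2⟩ := mem_Icc.1 ht
    exact hei i t (by omega) h2
  have hsplit := sum_Ioc_consecutive regret (Nat.zero_le tmin) htmin
  simp only [← Icc_add_one_left_eq_Ioc, zero_add] at hsplit
  rw [← hsplit, ← sum_add_ite_ne_eq_sum_card_mul _ it istar ei _ Δ hepisode, mul_sum]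
  gcongr ?_ + ?_
  · simpa [mul_comm] using sum_le_card_nsmul _ _ _ early
  · exact sum_le_sum late

/-- **Multi-parameter regret decomposition (Lemma 4).**
Each arm `i` has its own parameter `θstar i` and per-arm episodic estimates
`θhat i e`; in round `t` arm `i` is in episode `ei i t ∈ {1,…,emax i}`, and the
greedy algorithm chooses the arm maximizing the estimated reward.  With
`T_{i,e}` the number of rounds after `tmin` where arm `i` is chosen while in
episode `e`, and `T*_{i,e}` the number of rounds after `tmin` where arm `i` is
optimal but not chosen while in episode `e`, the regret is bounded by
`2 β tmin + β Σ_i Σ_e (T_{i,e} + T*_{i,e}) ‖θstar i − θhat i e‖`. -/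
theorem multi_parameter_regret_decomposition
    (p k T : ℕ) (hp : 0 < p) (hk : 0 < k) (hT : 0 < T)
    (x : Fin k → ℕ → EuclideanSpace ℝ (Fin p))
    (θstar : Fin k → EuclideanSpace ℝ (Fin p))
    (emax : Fin k → ℕ)
    (ei : Fin k → ℕ → ℕ)
    (hei : ∀ (i : Fin k) (t : ℕ), 1 ≤ t → t ≤ T → ei i t ∈ Finset.Icc 1 (emax i))
    (θhat : Fin k → ℕ → EuclideanSpace ℝ (Fin p))
    (it : ℕ → Fin k)
    (hgreedy : ∀ t : ℕ, 1 ≤ t → t ≤ T →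
      ⟪x (it t) t, θhat (it t) (ei (it t) t)⟫ =
        Finset.univ.sup' (Finset.univ_nonempty_iff.mpr ⟨⟨0, hk⟩⟩)
          (fun i : Fin k => ⟪x i t, θhat i (ei i t)⟫))
    (istar : ℕ → Fin k)
    (histar : ∀ t : ℕ, 1 ≤ t → t ≤ T →
      ⟪x (istar t) t, θstar (istar t)⟫ =
        Finset.univ.sup' (Finset.univ_nonempty_iff.mpr ⟨⟨0, hk⟩⟩)
          (fun i : Fin k => ⟪x i t, θstar i⟫))
    (tmin : ℕ) (htmin : tmin ≤ T)
    (β : ℝ) (hβ : 0 ≤ β)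
    (hx1 : ∀ (i j : Fin k) (t : ℕ), 1 ≤ t → t ≤ T → |⟪x i t, θstar j⟫| ≤ β)
    (hx2 : ∀ (i : Fin k) (t e : ℕ), 1 ≤ t → t ≤ T →
      |⟪x i t, θstar i - θhat i e⟫| ≤ β * ‖θstar i - θhat i e‖) :
    (∑ t ∈ Finset.Icc 1 T,
        (⟪x (istar t) t, θstar (istar t)⟫ - ⟪x (it t) t, θstar (it t)⟫))
      ≤ 2 * β * (tmin : ℝ)
        + β * ∑ i : Fin k, ∑ e ∈ Finset.Icc 1 (emax i),
            ((((Finset.Icc (tmin + 1) T).filter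
                  (fun t => it t = i ∧ ei i t = e)).card
              + ((Finset.Icc (tmin + 1) T).filter
                  (fun t => istar t = i ∧ it t ≠ i ∧ ei i t = e)).card : ℝ))
              * ‖θstar i - θhat i e‖ :=
  multi_parameter_regret_decomposition_general p k T hk x θstar emax ei hei θhat it hgreedy istar
    tmin htmin β hx1 hx2
end

section
/- Margin condition (Lemma 5, core inequality). Let σ > 0 and let η be a real random variable with the Gaussian distribution N(0, σ²). Then for every r ≥ σ, P(η ≥ r + σ²/r) ≥ (1/4)·e^{−3/2}·P(η ≥ r); in particular, P(η ≥ r + σ²/r | η ≥ r) ≥ 1/20. -/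
/-!
Substituting `u = √(x² + 3σ²)` in the Gaussian tail integral multiplies the density by exactly
`e^{-3/2}`, and for `x ≥ r ≥ σ` the Jacobian `x / √(x² + 3σ²)` is at least `1/2`. Hence
`P(η ≥ √(r² + 3σ²)) ≥ e^{-3/2}/2 · P(η ≥ r)`, and `r + σ²/r ≤ √(r² + 3σ²)` because `σ ≤ r`.
-/

open MeasureTheory ProbabilityTheory Set Real
open scoped NNReal ENNReal

lemma gaussianPDFReal_zero_sqrt_sq_add (v : ℝ≥0) {x a : ℝ} (h : 0 ≤ x ^ 2 + a) :
    gaussianPDFReal 0 v √(x ^ 2 + a) = rexp (-a / (2 * v)) * gaussianPDFReal 0 v x := by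
  simp only [gaussianPDFReal, sub_zero, sq_sqrt h]
  rw [mul_left_comm, ← exp_add]
  ring_nf

lemma gaussianPDF_zero_sqrt_sq_add (v : ℝ≥0) {x a : ℝ} (h : 0 ≤ x ^ 2 + a) :
    gaussianPDF 0 v √(x ^ 2 + a) = ENNReal.ofReal (rexp (-a / (2 * v))) * gaussianPDF 0 v x := by
  rw [gaussianPDF, gaussianPDFReal_zero_sqrt_sq_add v h, ENNReal.ofReal_mul (exp_pos _).le,
    gaussianPDF]

lemma half_le_div_sqrt_sq_add {x a : ℝ} (hx : 0 < x) (ha₀ : 0 ≤ a) (ha : a ≤ 3 * x ^ 2) :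
    1 / 2 ≤ x / √(x ^ 2 + a) := by
  have hle : √(x ^ 2 + a) ≤ 2 * x := sqrt_le_iff.2 ⟨by positivity, by nlinarith⟩
  rw [le_div_iff₀ (by positivity)]
  linarith

theorem gaussianReal_Ici_le_Ici_sqrt_sq_add (v : ℝ≥0) (hv : v ≠ 0) {r a : ℝ} (hr : 0 < r)
    (ha₀ : 0 ≤ a) (ha : a ≤ 3 * r ^ 2) :
    ENNReal.ofReal (rexp (-a / (2 * v)) / 2) * gaussianReal 0 v (Ici r)
      ≤ gaussianReal 0 v (Ici √(r ^ 2 + a)) := by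
  set f : ℝ → ℝ := fun x ↦ √(x ^ 2 + a)
  have hderiv : ∀ x ∈ Ici r, HasDerivWithinAt f (x / f x) (Ici r) x := fun x hx ↦ by
    have hx : 0 < x := hr.trans_le hx
    dsimp only [f]
    refine (((hasDerivAt_pow 2 x).add_const a).sqrt (by positivity)).hasDerivWithinAt
      |>.congr_deriv ?_
    field_simp
    norm_num
  have hmono : MonotoneOn f (Ici r) := fun x hx y _ hxy ↦ by
    have : 0 ≤ x := hr.le.trans hx
    dsimp only [f]
    gcongr
  calc ENNReal.ofReal (rexp (-a / (2 * v)) / 2) * gaussianReal 0 v (Ici r)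
      = ∫⁻ x in Ici r, ENNReal.ofReal (1 / 2) * gaussianPDF 0 v (f x) := by
        simp_rw [gaussianReal_apply 0 hv, f,
          gaussianPDF_zero_sqrt_sq_add v (add_nonneg (sq_nonneg _) ha₀), ← mul_assoc,
          ← ENNReal.ofReal_mul (by norm_num : (0 : ℝ) ≤ 1 / 2)]
        rw [lintegral_const_mul _ (measurable_gaussianPDF 0 v)]
        ring_nf
    _ ≤ ∫⁻ x in Ici r, ENNReal.ofReal (x / f x) * gaussianPDF 0 v (f x) := by
        refine setLIntegral_mono' measurableSet_Ici fun x hx ↦ ?_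
        gcongr ENNReal.ofReal ?_ * _
        exact half_le_div_sqrt_sq_add (hr.trans_le hx) ha₀
          (ha.trans (by gcongr; exact hx))
    _ = gaussianReal 0 v (f '' Ici r) := by
        rw [gaussianReal_apply 0 hv, lintegral_image_eq_lintegral_deriv_mul_of_monotoneOn
          measurableSet_Ici hderiv hmono]
    _ ≤ gaussianReal 0 v (Ici (f r)) :=
        measure_mono (image_subset_iff.2 fun x hx ↦ hmono self_mem_Ici hx hx)

lemma add_sq_div_le_sqrt_sq_add_three_mul_sq {σ r : ℝ} (hr : 0 < r) (hσr : σ ^ 2 ≤ r ^ 2) :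
    r + σ ^ 2 / r ≤ √(r ^ 2 + 3 * σ ^ 2) := by
  refine le_sqrt_of_sq_le ?_
  have hexpand : (r + σ ^ 2 / r) ^ 2 = r ^ 2 + 2 * σ ^ 2 + (σ ^ 2 / r) ^ 2 := by
    field_simp
    ring
  have hsq_div : (σ ^ 2 / r) ^ 2 ≤ σ ^ 2 := by
    rw [div_pow, div_le_iff₀ (by positivity)]
    nlinarith [sq_nonneg σ]
  linarith

lemma exp_three_halves_lt_five : rexp (3 / 2) < 5 := by
  have hsq : rexp (3 / 2) ^ 2 = rexp 1 ^ 3 := by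
    rw [← exp_nat_mul, ← exp_nat_mul]
    norm_num
  have h25 : rexp (3 / 2) ^ 2 < 5 ^ 2 := by
    rw [hsq]
    calc rexp 1 ^ 3 < 2.7182818286 ^ 3 := by gcongr; exact exp_one_lt_d9
      _ < 5 ^ 2 := by norm_num
  exact lt_of_pow_lt_pow_left₀ 2 (by norm_num) h25

lemma one_div_twenty_le_ofReal_exp_neg_three_halves_div_four :
    (1 / 20 : ℝ≥0∞) ≤ ENNReal.ofReal (1 / 4 * rexp (-(3 / 2))) := by
  rw [← ENNReal.ofReal_one, ← ENNReal.ofReal_ofNat, ← ENNReal.ofReal_div_of_pos (by norm_num)]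
  refine ENNReal.ofReal_le_ofReal ?_
  rw [exp_neg, ← div_eq_mul_inv, div_le_div_iff₀ (by norm_num) (exp_pos _)]
  linarith [exp_three_halves_lt_five]

lemma le_measure_inter_div_of_mul_le {α : Type*} [MeasurableSpace α] {μ : Measure α}
    [IsFiniteMeasure μ] {s t : Set α} {c : ℝ≥0∞} (hst : s ⊆ t) (ht : μ t ≠ 0)
    (h : c * μ t ≤ μ s) : c ≤ μ (s ∩ t) / μ t := by
  rwa [inter_eq_left.2 hst, ENNReal.le_div_iff_mul_le (.inl ht) (.inl (measure_ne_top μ t))]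

/-- **Margin condition (Lemma 5, core inequality).**
For `η ~ N(0, σ²)` and every `r ≥ σ`,
`P(η ≥ r + σ²/r) ≥ (1/4)·e^{−3/2}·P(η ≥ r)`; in particular the conditional
probability `P(η ≥ r + σ²/r | η ≥ r)` is at least `1/20`. -/
theorem margin_condition_gaussian
    (σ : ℝ) (hσ : 0 < σ) (r : ℝ) (hr : σ ≤ r) :
    ENNReal.ofReal ((1 / 4) * Real.exp (-(3 / 2))) *
        (gaussianReal 0 ⟨σ ^ 2, sq_nonneg σ⟩) {x : ℝ | r ≤ x}
      ≤ (gaussianReal 0 ⟨σ ^ 2, sq_nonneg σ⟩) {x : ℝ | r + σ ^ 2 / r ≤ x}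
    ∧ (1 / 20 : ENNReal)
      ≤ (gaussianReal 0 ⟨σ ^ 2, sq_nonneg σ⟩) ({x : ℝ | r + σ ^ 2 / r ≤ x} ∩ {x : ℝ | r ≤ x})
          / (gaussianReal 0 ⟨σ ^ 2, sq_nonneg σ⟩) {x : ℝ | r ≤ x} := by
  set v : ℝ≥0 := ⟨σ ^ 2, sq_nonneg σ⟩
  have hvσ : (v : ℝ) = σ ^ 2 := rfl
  have hv : v ≠ 0 := fun h ↦ hσ.ne' (pow_eq_zero_iff two_ne_zero |>.1 (congrArg Subtype.val h))
  have hr₀ : 0 < r := hσ.trans_le hr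
  have hσr : σ ^ 2 ≤ r ^ 2 := pow_le_pow_left₀ hσ.le hr 2
  have htail := gaussianReal_Ici_le_Ici_sqrt_sq_add v hv hr₀ (a := 3 * σ ^ 2) (by positivity)
    (by linarith)
  rw [hvσ, neg_div, mul_div_mul_right _ _ (pow_ne_zero 2 hσ.ne')] at htail
  have hshift := add_sq_div_le_sqrt_sq_add_three_mul_sq hr₀ hσr
  have hmargin : ENNReal.ofReal (1 / 4 * rexp (-(3 / 2))) * gaussianReal 0 v (Ici r)
      ≤ gaussianReal 0 v (Ici (r + σ ^ 2 / r)) :=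
    calc _ ≤ ENNReal.ofReal (rexp (-(3 / 2)) / 2) * gaussianReal 0 v (Ici r) := by
          gcongr
          linarith [exp_pos (-(3 / 2))]
      _ ≤ _ := htail.trans (measure_mono (Ici_subset_Ici.2 hshift))
  have hpos : gaussianReal 0 v (Ici r) ≠ 0 := fun h ↦ by
    simpa using gaussianReal_absolutelyContinuous' 0 hv h
  refine ⟨hmargin, le_measure_inter_div_of_mul_le (Ici_subset_Ici.2 (by simp; positivity)) hpos ?_⟩
  exact (mul_le_mul_left one_div_twenty_le_ofReal_exp_neg_three_halves_div_four _).trans hmargin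
end

section
/- Monotonicity of the conditional margin probability (Lemma A.10 of the margin analysis). Let σ > 0, let η be a real random variable with the Gaussian distribution N(0, σ²), and let α > 0. Then the function b ↦ P(η ≥ b + α | η ≥ b) = P(η ≥ b + α)/P(η ≥ b) is nonincreasing in b on ℝ. -/
open MeasureTheory ProbabilityTheory Real Set NNReal

/-!
Let `φ` be the Gaussian density and `F b = ∫_b^∞ φ` its tail, so `F' = -φ`. The derivative of
`F (b + α) / F b` has the sign of `φ b * F (b + α) - φ (b + α) * F b`. Log-concavity of `φ` gives
`φ b * φ x ≤ φ (b + α) * φ (x - α)` for `x ≥ b + α`, and integrating over `x > b + α` turns this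
into `φ b * F (b + α) ≤ φ (b + α) * F b`.
-/

theorem hasDerivAt_integral_Ioi {E : Type*} [NormedAddCommGroup E] [NormedSpace ℝ E] [CompleteSpace E]
    {f : ℝ → E} {b : ℝ} (hf : Integrable f) (hfb : ContinuousAt f b) :
    HasDerivAt (fun a ↦ ∫ x in Ioi a, f x) (-f b) b := by
  have hsplit : (fun a ↦ ∫ x in Ioi a, f x) = fun a ↦ (∫ x in a..b, f x) + ∫ x in Ioi b, f x :=
    funext fun a ↦ (intervalIntegral.integral_interval_add_Ioi hf.integrableOn hf.integrableOn).symm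
  rw [hsplit]
  exact (intervalIntegral.integral_hasDerivAt_left hf.intervalIntegrable
    hf.aestronglyMeasurable.stronglyMeasurableAtFilter hfb).add_const _

theorem integral_Ioi_comp_sub {E : Type*} [NormedAddCommGroup E] [NormedSpace ℝ E]
    (f : ℝ → E) (b α : ℝ) : ∫ x in Ioi (b + α), f (x - α) = ∫ x in Ioi b, f x := by
  rw [← preimage_sub_const_Ioi]
  exact (measurePreserving_sub_right volume α).setIntegral_preimage_emb
    (measurableEmbedding_subRight α) f (Ioi b)

theorem mul_integral_Ioi_add_le {f : ℝ → ℝ} {b α : ℝ} (hf : Integrable f)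
    (h : ∀ x, b + α < x → f b * f x ≤ f (b + α) * f (x - α)) :
    f b * ∫ x in Ioi (b + α), f x ≤ f (b + α) * ∫ x in Ioi b, f x := by
  rw [← integral_Ioi_comp_sub f b α, ← integral_const_mul, ← integral_const_mul]
  exact setIntegral_mono_on (hf.const_mul _).integrableOn
    ((hf.comp_sub_right α).const_mul _).integrableOn measurableSet_Ioi h

theorem antitone_comp_add_div_of_hasDerivAt {F f : ℝ → ℝ} {α : ℝ} (hF : ∀ b, HasDerivAt F (-f b) b)
    (hpos : ∀ b, 0 < F b) (h : ∀ b, f b * F (b + α) ≤ f (b + α) * F b) :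
    Antitone fun b ↦ F (b + α) / F b := by
  have hderiv : ∀ b, HasDerivAt (fun b ↦ F (b + α) / F b)
      ((-f (b + α) * F b - F (b + α) * -f b) / F b ^ 2) b := fun b ↦
    ((hF (b + α)).comp_add_const b α).div (hF b) (hpos b).ne'
  refine antitone_of_deriv_nonpos (fun b ↦ (hderiv b).differentiableAt) fun b ↦ ?_
  rw [(hderiv b).deriv]
  exact div_nonpos_of_nonpos_of_nonneg (by linarith [h b]) (sq_nonneg _)

namespace ProbabilityTheory

variable {μ : ℝ} {v : ℝ≥0}

theorem gaussianPDFReal_mul_le {b α x : ℝ} (hα : 0 ≤ α) (hx : b + α ≤ x) :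
    gaussianPDFReal μ v b * gaussianPDFReal μ v x
      ≤ gaussianPDFReal μ v (b + α) * gaussianPDFReal μ v (x - α) := by
  simp only [gaussianPDFReal, mul_mul_mul_comm _ (rexp _), ← Real.exp_add, ← add_div]
  refine mul_le_mul_of_nonneg_left (exp_le_exp.2 ?_) (by positivity)
  gcongr ?_ / _
  nlinarith [mul_nonneg hα (sub_nonneg.2 hx)]

theorem integral_Ioi_gaussianPDFReal_pos (hv : v ≠ 0) (b : ℝ) :
    0 < ∫ x in Ioi b, gaussianPDFReal μ v x := by
  rw [setIntegral_pos_iff_support_of_nonneg_ae (.of_forall (gaussianPDFReal_nonneg μ v))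
    (integrable_gaussianPDFReal μ v).integrableOn,
    Function.support_eq_univ fun x ↦ (gaussianPDFReal_pos μ v x hv).ne', univ_inter]
  simp

theorem gaussianReal_Ici (hv : v ≠ 0) (b : ℝ) :
    gaussianReal μ v (Ici b) = ENNReal.ofReal (∫ x in Ioi b, gaussianPDFReal μ v x) := by
  rw [gaussianReal_apply_eq_integral μ hv, integral_Ici_eq_integral_Ioi]

theorem antitone_gaussianReal_Ici_add_div (hv : v ≠ 0) {α : ℝ} (hα : 0 ≤ α) :
    Antitone fun b ↦ gaussianReal μ v (Ici (b + α)) / gaussianReal μ v (Ici b) := by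
  have hcont : Continuous (gaussianPDFReal μ v) := by
    rw [gaussianPDFReal_def]
    fun_prop
  have hratio := antitone_comp_add_div_of_hasDerivAt
    (fun b ↦ hasDerivAt_integral_Ioi (integrable_gaussianPDFReal μ v) hcont.continuousAt)
    (integral_Ioi_gaussianPDFReal_pos hv)
    fun b ↦ mul_integral_Ioi_add_le (integrable_gaussianPDFReal μ v)
      fun x hx ↦ gaussianPDFReal_mul_le hα hx.le
  intro b₁ b₂ hb
  simp only [gaussianReal_Ici hv, ← ENNReal.ofReal_div_of_pos (integral_Ioi_gaussianPDFReal_pos hv _)]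
  exact ENNReal.ofReal_le_ofReal (hratio hb)

end ProbabilityTheory

/-- **Monotonicity of the conditional margin probability (Lemma A.10).**
For `η ~ N(0, σ²)` and `α > 0`, the conditional probability
`b ↦ P(η ≥ b + α | η ≥ b) = P(η ≥ b + α)/P(η ≥ b)` is nonincreasing in `b`. -/
theorem conditional_margin_probability_antitone
    (σ : ℝ) (hσ : 0 < σ) (α : ℝ) (hα : 0 < α) :
    Antitone (fun b : ℝ =>
      (gaussianReal 0 ⟨σ ^ 2, sq_nonneg σ⟩) {x : ℝ | b + α ≤ x}
        / (gaussianReal 0 ⟨σ ^ 2, sq_nonneg σ⟩) {x : ℝ | b ≤ x}) := by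
  have hv : (⟨σ ^ 2, sq_nonneg σ⟩ : ℝ≥0) ≠ 0 := fun h ↦ (pow_pos hσ 2).ne' (congrArg NNReal.toReal h)
  exact antitone_gaussianReal_Ici_add_div hv hα.le
end

section
/- Hoeffding-type inequality for sub-Gaussian martingale differences with predictable coefficients. Let (Ω, F, P) be a probability space with a filtration F_0 ⊆ F_1 ⊆ … ⊆ F_T, let c > 0 and κ > 0, and for t = 1,…,T let Z_t be an F_t-measurable real random variable whose conditional moment generating function satisfies E[exp(s·Z_t) | F_{t−1}] ≤ exp(c·s²·κ²) almost surely for every s ∈ ℝ. Let a_1,…,a_T be real random variables such that a_t is F_{t−1}-measurable with |a_t| ≤ α_t almost surely, for deterministic constants α_1,…,α_T ≥ 0 with Σ_{t=1}^T α_t² > 0. Then for every τ > 0, P( |Σ_{t=1}^T a_t·Z_t| ≥ τ ) ≤ 2·exp( −τ² / (4·c·κ²·Σ_{t=1}^T α_t²) ). -/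
/-!
Chernoff's method. Conditionally on `ℱ (t - 1)`, the increment `a t * Z t` is sub-Gaussian with
variance proxy `2 c κ² (α t)²`: since `a t` is known at time `t - 1` and `|a t| ≤ α t`, it is a
predictable convex combination of `± α t`, and convexity of `exp` bounds its conditional MGF by
that of `Z t` at `± s α t`. Peeling off the last increment by the tower property then shows that
the sum is sub-Gaussian with variance proxy `2 c κ² Σ (α t)²`, and the two one-sided Chernoff
bounds give the result.
-/

open MeasureTheory ProbabilityTheory Real
open scoped NNReal

lemma abs_div_le_one_of_abs_le {b A : ℝ} (hb : |b| ≤ A) : |b / A| ≤ 1 := by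
  have hA : 0 ≤ A := (abs_nonneg b).trans hb
  rw [abs_div, abs_of_nonneg hA]
  exact div_le_one_of_le₀ hb hA

lemma exp_mul_mul_le_convexComb_of_abs_le {b A : ℝ} (hb : |b| ≤ A) (s x : ℝ) :
    exp (s * (b * x)) ≤
      (1 + b / A) / 2 * exp (s * A * x) + (1 - b / A) / 2 * exp (-(s * A) * x) := by
  have hbA := abs_div_le_one_of_abs_le hb
  have hcancel : b / A * A = b := div_mul_cancel_of_imp fun hA ↦ abs_nonpos_iff.mp (hA ▸ hb)
  have hcomb : s * (b * x) =
      (1 + b / A) / 2 * (s * A * x) + (1 - b / A) / 2 * (-(s * A) * x) := by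
    linear_combination (-(s * x)) * hcancel
  rw [hcomb]
  exact convexOn_exp.2 (Set.mem_univ _) (Set.mem_univ _)
    (by linarith [neg_abs_le (b / A)]) (by linarith [le_abs_self (b / A)]) (by ring)

lemma exp_mul_mul_le_exp_add_exp_of_abs_le {b A : ℝ} (hb : |b| ≤ A) (s x : ℝ) :
    exp (s * (b * x)) ≤ exp (s * A * x) + exp (-(s * A) * x) := by
  have hA : 0 ≤ A := (abs_nonneg b).trans hb
  calc exp (s * (b * x)) ≤ exp |s * A * x| := by
        refine exp_le_exp.2 ((le_abs_self _).trans ?_)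
        rw [abs_mul, abs_mul, abs_mul, abs_mul, abs_of_nonneg hA, ← mul_assoc]
        gcongr
    _ ≤ exp (s * A * x) + exp (-(s * A * x)) := exp_abs_le _
    _ = exp (s * A * x) + exp (-(s * A) * x) := by rw [neg_mul]

namespace ProbabilityTheory

variable {Ω : Type*} {m mΩ : MeasurableSpace Ω} {μ : Measure Ω}

lemma integral_mul_le_of_condExp_le [IsFiniteMeasure μ] (hm : m ≤ mΩ) {W Y : Ω → ℝ} {K : ℝ}
    (hW : StronglyMeasurable[m] W) (hW0 : 0 ≤ᵐ[μ] W) (hWint : Integrable W μ)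
    (hY : Integrable Y μ) (hWY : Integrable (W * Y) μ) (hK : ∀ᵐ ω ∂μ, μ[Y | m] ω ≤ K) :
    ∫ ω, W ω * Y ω ∂μ ≤ K * ∫ ω, W ω ∂μ := by
  have hpull : μ[W * Y | m] =ᵐ[μ] W * μ[Y | m] :=
    condExp_mul_of_stronglyMeasurable_left hW hWY hY
  calc ∫ ω, W ω * Y ω ∂μ = ∫ ω, (W * μ[Y | m]) ω ∂μ :=
        (integral_condExp hm).symm.trans (integral_congr_ae hpull)
    _ ≤ ∫ ω, K * W ω ∂μ := by
        refine integral_mono_ae (integrable_condExp.congr hpull) (hWint.const_mul K) ?_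
        filter_upwards [hW0, hK] with ω hW0 hK
        simpa [mul_comm] using mul_le_mul_of_nonneg_left hK hW0
    _ = K * ∫ ω, W ω ∂μ := integral_const_mul K W

lemma ae_condExp_le_of_le_convexComb (hm : m ≤ mΩ) {F G H p q : Ω → ℝ} {K : ℝ}
    (hp : StronglyMeasurable[m] p) (hq : StronglyMeasurable[m] q)
    (hw : ∀ᵐ ω ∂μ, 0 ≤ p ω ∧ 0 ≤ q ω ∧ p ω + q ω = 1)
    (hF : Integrable F μ) (hG : Integrable G μ) (hH : Integrable H μ)
    (hFle : F ≤ᵐ[μ] p * G + q * H)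
    (hGK : ∀ᵐ ω ∂μ, μ[G | m] ω ≤ K) (hHK : ∀ᵐ ω ∂μ, μ[H | m] ω ≤ K) :
    ∀ᵐ ω ∂μ, μ[F | m] ω ≤ K := by
  have hpG : Integrable (p * G) μ := hG.bdd_mul (c := 1) (hp.mono hm).aestronglyMeasurable <| by
    filter_upwards [hw] with ω ⟨hp0, hq0, hpq⟩
    rw [Real.norm_of_nonneg hp0]
    linarith
  have hqH : Integrable (q * H) μ := hH.bdd_mul (c := 1) (hq.mono hm).aestronglyMeasurable <| by
    filter_upwards [hw] with ω ⟨hp0, hq0, hpq⟩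
    rw [Real.norm_of_nonneg hq0]
    linarith
  filter_upwards [condExp_mono hF (hpG.add hqH) hFle, condExp_add hpG hqH m,
    condExp_mul_of_stronglyMeasurable_left hp hpG hG,
    condExp_mul_of_stronglyMeasurable_left hq hqH hH, hGK, hHK, hw]
    with ω hmono hadd hpull_p hpull_q hGω hHω ⟨hp0, hq0, hpq⟩
  calc μ[F | m] ω ≤ p ω * μ[G | m] ω + q ω * μ[H | m] ω := by
        rwa [hadd, Pi.add_apply, hpull_p, hpull_q] at hmono
    _ ≤ p ω * K + q ω * K := by gcongr
    _ = K := by rw [← add_mul, hpq, one_mul]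

/-- Mathlib's `HasCondSubgaussianMGF` goes through `condExpKernel`, which needs
`StandardBorelSpace Ω`; this variant uses `μ[· | m]` directly. -/
structure HasCondExpSubgaussianMGF {Ω : Type*} (m : MeasurableSpace Ω) {mΩ : MeasurableSpace Ω}
    (X : Ω → ℝ) (c : ℝ≥0) (μ : Measure Ω) : Prop where
  integrable_exp_mul : ∀ t : ℝ, Integrable (fun ω ↦ exp (t * X ω)) μ
  condExp_exp_mul_le : ∀ t : ℝ, ∀ᵐ ω ∂μ, μ[fun ω' ↦ exp (t * X ω') | m] ω ≤ exp (c * t ^ 2 / 2)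

lemma HasCondExpSubgaussianMGF.aemeasurable {X : Ω → ℝ} {c : ℝ≥0}
    (hX : HasCondExpSubgaussianMGF m X c μ) : AEMeasurable X μ :=
  aemeasurable_of_aemeasurable_exp_mul one_ne_zero (hX.integrable_exp_mul 1).aemeasurable

lemma HasCondExpSubgaussianMGF.mul_of_abs_le (hm : m ≤ mΩ) {X b : Ω → ℝ} {c : ℝ≥0} {A : ℝ}
    (hX : HasCondExpSubgaussianMGF m X c μ) (hb : Measurable[m] b) (hbA : ∀ᵐ ω ∂μ, |b ω| ≤ A) :
    HasCondExpSubgaussianMGF m (fun ω ↦ b ω * X ω) (⟨A ^ 2, sq_nonneg A⟩ * c) μ := by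
  set p : Ω → ℝ := fun ω ↦ (1 + b ω / A) / 2
  set q : Ω → ℝ := fun ω ↦ (1 - b ω / A) / 2
  have hp : StronglyMeasurable[m] p :=
    (((hb.div_const A).const_add 1).div_const 2).stronglyMeasurable
  have hq : StronglyMeasurable[m] q :=
    (((hb.div_const A).const_sub 1).div_const 2).stronglyMeasurable
  have hw : ∀ᵐ ω ∂μ, 0 ≤ p ω ∧ 0 ≤ q ω ∧ p ω + q ω = 1 := by
    filter_upwards [hbA] with ω hω
    have := abs_div_le_one_of_abs_le hω
    refine ⟨?_, ?_, by ring⟩ <;> simp only [p, q] <;>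
      linarith [neg_abs_le (b ω / A), le_abs_self (b ω / A)]
  have hint : ∀ t, Integrable (fun ω ↦ exp (t * (b ω * X ω))) μ := fun t ↦ by
    have hmeas := ((hb.mono hm le_rfl).aemeasurable.mul hX.aemeasurable).const_mul t
    refine ((hX.integrable_exp_mul (t * A)).add (hX.integrable_exp_mul (-(t * A)))).mono'
      hmeas.exp.aestronglyMeasurable ?_
    filter_upwards [hbA] with ω hω
    rw [Real.norm_of_nonneg (exp_nonneg _)]
    exact exp_mul_mul_le_exp_add_exp_of_abs_le hω t (X ω)
  refine ⟨hint, fun t ↦ ?_⟩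
  have hK : exp (↑(⟨A ^ 2, sq_nonneg A⟩ * c : ℝ≥0) * t ^ 2 / 2) = exp (c * (t * A) ^ 2 / 2) := by
    change exp (A ^ 2 * c * t ^ 2 / 2) = _
    ring_nf
  rw [hK]
  refine ae_condExp_le_of_le_convexComb hm hp hq hw (hint t) (hX.integrable_exp_mul (t * A))
    (hX.integrable_exp_mul (-(t * A))) ?_ (hX.condExp_exp_mul_le (t * A))
    (by simpa only [neg_sq] using hX.condExp_exp_mul_le (-(t * A)))
  filter_upwards [hbA] with ω hω using exp_mul_mul_le_convexComb_of_abs_le hω t (X ω)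

lemma integrable_exp_mul_exp {f g : Ω → ℝ} (hf : AEMeasurable f μ) (hg : AEMeasurable g μ)
    (hf2 : Integrable (fun ω ↦ exp (2 * f ω)) μ) (hg2 : Integrable (fun ω ↦ exp (2 * g ω)) μ) :
    Integrable (fun ω ↦ exp (f ω) * exp (g ω)) μ := by
  refine ((hf2.add hg2).div_const 2).mono' (hf.exp.mul hg.exp).aestronglyMeasurable
    (ae_of_all _ fun ω ↦ ?_)
  rw [Real.norm_of_nonneg (by positivity), Pi.add_apply, two_mul, two_mul, exp_add, exp_add]
  nlinarith [sq_nonneg (exp (f ω) - exp (g ω))]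

lemma HasSubgaussianMGF.add_of_hasCondExpSubgaussianMGF [IsFiniteMeasure μ] (hm : m ≤ mΩ)
    {S Y : Ω → ℝ} {cS cY : ℝ≥0} (hSm : Measurable[m] S) (hS : HasSubgaussianMGF S cS μ)
    (hY : HasCondExpSubgaussianMGF m Y cY μ) :
    HasSubgaussianMGF (fun ω ↦ S ω + Y ω) (cS + cY) μ := by
  have hprod : ∀ t, Integrable (fun ω ↦ exp (t * S ω) * exp (t * Y ω)) μ := fun t ↦
    integrable_exp_mul_exp (hS.aemeasurable.const_mul t) (hY.aemeasurable.const_mul t)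
      (by simpa only [mul_assoc] using hS.integrable_exp_mul (2 * t))
      (by simpa only [mul_assoc] using hY.integrable_exp_mul (2 * t))
  refine ⟨fun t ↦ by simpa only [mul_add, exp_add] using hprod t, fun t ↦ ?_⟩
  calc mgf (fun ω ↦ S ω + Y ω) μ t = ∫ ω, exp (t * S ω) * exp (t * Y ω) ∂μ := by
        simp only [mgf, mul_add, exp_add]
    _ ≤ exp (cY * t ^ 2 / 2) * ∫ ω, exp (t * S ω) ∂μ :=
        integral_mul_le_of_condExp_le hm (hSm.const_mul t).exp.stronglyMeasurable
          (ae_of_all _ fun _ ↦ exp_nonneg _) (hS.integrable_exp_mul t) (hY.integrable_exp_mul t)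
          (hprod t) (hY.condExp_exp_mul_le t)
    _ ≤ exp (cY * t ^ 2 / 2) * exp (cS * t ^ 2 / 2) := by gcongr; exact hS.mgf_le t
    _ = exp (↑(cS + cY) * t ^ 2 / 2) := by rw [← exp_add, NNReal.coe_add]; ring_nf

lemma HasSubgaussianMGF.sum_Icc_of_hasCondExpSubgaussianMGF [IsProbabilityMeasure μ]
    {ℱ : Filtration ℕ mΩ} {Y : ℕ → Ω → ℝ} {c : ℕ → ℝ≥0} (n : ℕ)
    (hY : ∀ t ∈ Finset.Icc 1 n, Measurable[ℱ t] (Y t))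
    (h : ∀ t ∈ Finset.Icc 1 n, HasCondExpSubgaussianMGF (ℱ (t - 1)) (Y t) (c t) μ) :
    HasSubgaussianMGF (fun ω ↦ ∑ t ∈ Finset.Icc 1 n, Y t ω) (∑ t ∈ Finset.Icc 1 n, c t) μ := by
  induction n with
  | zero => simp
  | succ n ih =>
    have hsub : Finset.Icc 1 n ⊆ Finset.Icc 1 (n + 1) := Finset.Icc_subset_Icc_right n.le_succ
    have hlast : HasCondExpSubgaussianMGF (ℱ n) (Y (n + 1)) (c (n + 1)) μ := by
      simpa using h (n + 1) (by simp)
    simp_rw [Finset.sum_Icc_succ_top (Nat.le_add_left 1 n)]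
    refine (ih (fun t ht ↦ hY t (hsub ht)) fun t ht ↦ h t (hsub ht))
      |>.add_of_hasCondExpSubgaussianMGF (ℱ.le n) ?_ hlast
    exact Finset.measurable_sum _ fun t ht ↦
      (hY t (hsub ht)).mono (ℱ.mono (Finset.mem_Icc.1 ht).2) le_rfl

lemma HasSubgaussianMGF.measure_abs_ge_le [IsFiniteMeasure μ] {X : Ω → ℝ} {c : ℝ≥0}
    (h : HasSubgaussianMGF X c μ) {ε : ℝ} (hε : 0 ≤ ε) :
    μ {ω | ε ≤ |X ω|} ≤ ENNReal.ofReal (2 * exp (-ε ^ 2 / (2 * c))) := by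
  have hE := exp_nonneg (-ε ^ 2 / (2 * c))
  have htail : ∀ {Y : Ω → ℝ}, HasSubgaussianMGF Y c μ →
      μ {ω | ε ≤ Y ω} ≤ ENNReal.ofReal (exp (-ε ^ 2 / (2 * c))) := fun hY ↦
    (ENNReal.le_ofReal_iff_toReal_le (measure_ne_top _ _) hE).2 (hY.measure_ge_le hε)
  calc μ {ω | ε ≤ |X ω|} ≤ μ ({ω | ε ≤ X ω} ∪ {ω | ε ≤ (-X) ω}) :=
        measure_mono fun _ hω ↦ le_abs.mp (Set.mem_ofPred.mp hω)
    _ ≤ μ {ω | ε ≤ X ω} + μ {ω | ε ≤ (-X) ω} := measure_union_le _ _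
    _ ≤ ENNReal.ofReal (exp (-ε ^ 2 / (2 * c))) + ENNReal.ofReal (exp (-ε ^ 2 / (2 * c))) :=
        add_le_add (htail h) (htail h.neg)
    _ = ENNReal.ofReal (2 * exp (-ε ^ 2 / (2 * c))) := by
        rw [← ENNReal.ofReal_add hE hE, ← two_mul]

end ProbabilityTheory

theorem hoeffding_subgaussian_mds_adaptive_general
    {Ω : Type*} {mΩ : MeasurableSpace Ω} (P : Measure Ω) [IsProbabilityMeasure P]
    (T : ℕ) (ℱ : Filtration ℕ mΩ)
    (c κ : ℝ) (hc : 0 < c)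
    (Z : ℕ → Ω → ℝ)
    (hZmeas : ∀ t ∈ Finset.Icc 1 T, Measurable[ℱ t] (Z t))
    (hZint : ∀ t ∈ Finset.Icc 1 T, ∀ s : ℝ,
      Integrable (fun ω => Real.exp (s * Z t ω)) P)
    (hmgf : ∀ t ∈ Finset.Icc 1 T, ∀ s : ℝ,
      ∀ᵐ ω ∂P, (P[fun ω' => Real.exp (s * Z t ω') | ℱ (t - 1)]) ω
        ≤ Real.exp (c * s ^ 2 * κ ^ 2))
    (a : ℕ → Ω → ℝ)
    (hameas : ∀ t ∈ Finset.Icc 1 T, Measurable[ℱ (t - 1)] (a t))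
    (α : ℕ → ℝ)
    (habd : ∀ t ∈ Finset.Icc 1 T, ∀ᵐ ω ∂P, |a t ω| ≤ α t)
    (τ : ℝ) (hτ : 0 < τ) :
    P {ω : Ω | τ ≤ |∑ t ∈ Finset.Icc 1 T, a t ω * Z t ω|}
      ≤ ENNReal.ofReal
          (2 * Real.exp (-(τ ^ 2 / (4 * c * κ ^ 2 * ∑ t ∈ Finset.Icc 1 T, α t ^ 2)))) := by
  set v : ℝ≥0 := ⟨2 * c * κ ^ 2, by positivity⟩
  have hZ : ∀ t ∈ Finset.Icc 1 T, HasCondExpSubgaussianMGF (ℱ (t - 1)) (Z t) v P :=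
    fun t ht ↦ ⟨hZint t ht, fun s ↦ by
      filter_upwards [hmgf t ht s] with ω hω
      convert hω using 2
      change 2 * c * κ ^ 2 * s ^ 2 / 2 = _
      ring⟩
  have haZ_meas : ∀ t ∈ Finset.Icc 1 T, Measurable[ℱ t] (fun ω ↦ a t ω * Z t ω) := fun t ht ↦
    ((hameas t ht).mono (ℱ.mono (Nat.sub_le t 1)) le_rfl).mul (hZmeas t ht)
  have hS := HasSubgaussianMGF.sum_Icc_of_hasCondExpSubgaussianMGF T haZ_meas fun t ht ↦
    (hZ t ht).mul_of_abs_le (ℱ.le _) (hameas t ht) (habd t ht)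
  refine (hS.measure_abs_ge_le hτ.le).trans_eq ?_
  have hsum : ((∑ t ∈ Finset.Icc 1 T, ⟨α t ^ 2, sq_nonneg (α t)⟩ * v : ℝ≥0) : ℝ) =
      2 * c * κ ^ 2 * ∑ t ∈ Finset.Icc 1 T, α t ^ 2 := by
    rw [NNReal.coe_sum, Finset.mul_sum]
    exact Finset.sum_congr rfl fun t _ ↦ by change α t ^ 2 * (2 * c * κ ^ 2) = _; ring
  rw [hsum]
  ring_nf

/-- **Hoeffding-type inequality for sub-Gaussian martingale differences with
predictable coefficients (Lemma on dependent Hoeffding bounds).**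
If each `Z t` is `ℱ t`-measurable with conditional MGF bounded by
`exp(c s² κ²)`, and the coefficients `a t` are `ℱ (t−1)`-measurable with
`|a t| ≤ α t` a.s., then
`P(|Σ_t a t · Z t| ≥ τ) ≤ 2 exp(−τ² / (4 c κ² Σ_t α t²))`. -/
theorem hoeffding_subgaussian_mds_adaptive
    {Ω : Type*} {mΩ : MeasurableSpace Ω} (P : Measure Ω) [IsProbabilityMeasure P]
    (T : ℕ) (ℱ : Filtration ℕ mΩ)
    (c κ : ℝ) (hc : 0 < c) (hκ : 0 < κ)
    (Z : ℕ → Ω → ℝ)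
    (hZmeas : ∀ t ∈ Finset.Icc 1 T, Measurable[ℱ t] (Z t))
    (hZint : ∀ t ∈ Finset.Icc 1 T, ∀ s : ℝ,
      Integrable (fun ω => Real.exp (s * Z t ω)) P)
    (hmgf : ∀ t ∈ Finset.Icc 1 T, ∀ s : ℝ,
      ∀ᵐ ω ∂P, (P[fun ω' => Real.exp (s * Z t ω') | ℱ (t - 1)]) ω
        ≤ Real.exp (c * s ^ 2 * κ ^ 2))
    (a : ℕ → Ω → ℝ)
    (hameas : ∀ t ∈ Finset.Icc 1 T, Measurable[ℱ (t - 1)] (a t))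
    (α : ℕ → ℝ) (hα : ∀ t ∈ Finset.Icc 1 T, 0 ≤ α t)
    (habd : ∀ t ∈ Finset.Icc 1 T, ∀ᵐ ω ∂P, |a t ω| ≤ α t)
    (hsum : 0 < ∑ t ∈ Finset.Icc 1 T, α t ^ 2)
    (τ : ℝ) (hτ : 0 < τ) :
    P {ω : Ω | τ ≤ |∑ t ∈ Finset.Icc 1 T, a t ω * Z t ω|}
      ≤ ENNReal.ofReal
          (2 * Real.exp (-(τ ^ 2 / (4 * c * κ ^ 2 * ∑ t ∈ Finset.Icc 1 T, α t ^ 2)))) :=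
  hoeffding_subgaussian_mds_adaptive_general P T ℱ c κ hc Z hZmeas hZint hmgf a hameas α habd τ hτ
end

section
/- Sub-Gaussian norm of the greedily selected Gaussian context (Lemma 2, sub-Gaussian part). There exists an absolute constant c₂ > 0 with the following property. Let p ≥ 1, k ≥ 2, σ > 0, let x_1,…,x_k be independent random vectors in ℝ^p, each with law N(0, σ²·I_{p×p}), and let θ ∈ ℝ^p be a fixed nonzero vector. Let J be the almost-surely unique index maximizing ⟨x_i, θ⟩ over i ∈ {1,…,k}, and set z = x_J. Then for every unit vector w ∈ ℝ^p and every u ≥ 0, P(|⟨z, w⟩| ≥ u) ≤ e·exp( −u²/(c₂·σ²·log k) ); that is, z is a sub-Gaussian random vector with sub-Gaussian norm at most c·σ·√(log k) for an absolute constant c. -/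
open MeasureTheory ProbabilityTheory Finset

/-!
Each candidate score `⟨x i, w⟩` is a unit-weighted sum of independent `N(0, σ²)` coordinates, hence
`σ²`-sub-Gaussian, with two-sided tail `2 exp (-u² / (2σ²))`. Whatever index `J` selects, the event
`|⟨x J, w⟩| ≥ u` lies in the union of the `k` events `|⟨x i, w⟩| ≥ u`, so its probability is at most
`min 1 (2k exp (-u² / (2σ²)))`, and this is at most `e · exp (-u² / (8 σ² log k))` since `k ≥ 2`.
-/

open Real
open scoped NNReal

namespace ProbabilityTheory

variable {Ω : Type*} {mΩ : MeasurableSpace Ω} {μ : Measure Ω}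

lemma hasSubgaussianMGF_of_map_eq_gaussianReal {X : Ω → ℝ} {v : ℝ≥0}
    (hX : μ.map X = gaussianReal 0 v) : HasSubgaussianMGF X v μ := by
  have hXm : AEMeasurable X μ := aemeasurable_of_map_neZero (by rw [hX]; infer_instance)
  rw [← HasSubgaussianMGF.id_map_iff hXm, hX]
  exact ⟨integrable_exp_mul_gaussianReal, fun t ↦ by simp [mgf_id_gaussianReal]⟩

lemma HasSubgaussianMGF.sum_mul_of_iIndepFun {ι : Type*} [Fintype ι] {X : ι → Ω → ℝ} {c : ℝ≥0}
    (h_indep : iIndepFun X μ) (h_subG : ∀ i, HasSubgaussianMGF (X i) c μ)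
    {w : ι → ℝ} (hw : ∑ i, w i ^ 2 = 1) :
    HasSubgaussianMGF (fun ω ↦ ∑ i, X i ω * w i) c μ := by
  have h_indep' : iIndepFun (fun i ω ↦ w i * X i ω) μ :=
    h_indep.comp (fun i x ↦ w i * x) fun i ↦ measurable_const_mul (w i)
  convert sum_of_iIndepFun h_indep' (s := univ) fun i _ ↦ (h_subG i).const_mul (w i) using 1
  · simp only [mul_comm (X _ _)]
  · ext
    rw [NNReal.coe_sum]
    change (c : ℝ) = ∑ i, w i ^ 2 * (c : ℝ)
    rw [← Finset.sum_mul, hw, one_mul]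

lemma HasSubgaussianMGF.measureReal_abs_ge_le [IsFiniteMeasure μ] {X : Ω → ℝ} {c : ℝ≥0}
    (h : HasSubgaussianMGF X c μ) {ε : ℝ} (hε : 0 ≤ ε) :
    μ.real {ω | ε ≤ |X ω|} ≤ 2 * exp (-ε ^ 2 / (2 * c)) := by
  have hsub : {ω | ε ≤ |X ω|} ⊆ {ω | ε ≤ X ω} ∪ {ω | ε ≤ (-X) ω} := fun ω (hω : ε ≤ |X ω|) ↦
    (le_abs.1 hω : ε ≤ X ω ∨ ε ≤ -X ω)
  calc μ.real {ω | ε ≤ |X ω|} ≤ μ.real {ω | ε ≤ X ω} + μ.real {ω | ε ≤ (-X) ω} :=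
        (measureReal_mono hsub).trans (measureReal_union_le _ _)
    _ ≤ 2 * exp (-ε ^ 2 / (2 * c)) := by
        linarith [h.measure_ge_le hε, h.neg.measure_ge_le hε]

end ProbabilityTheory

lemma MeasureTheory.measureReal_setOf_index_le_sum {Ω ι : Type*} [MeasurableSpace Ω]
    {μ : Measure Ω} [IsFiniteMeasure μ] [Fintype ι] (p : ι → Ω → Prop) (J : Ω → ι) :
    μ.real {ω | p (J ω) ω} ≤ ∑ i, μ.real {ω | p i ω} :=
  (measureReal_mono fun ω hω ↦ Set.mem_iUnion.2 ⟨J ω, hω⟩).trans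
    (measureReal_iUnion_fintype_le _)

lemma Real.min_one_mul_two_mul_exp_le {k s u : ℝ} (hk : 2 ≤ k) (hs : 0 < s) :
    min 1 (k * (2 * exp (-u ^ 2 / (2 * s)))) ≤ exp 1 * exp (-(u ^ 2 / (8 * s * log k))) := by
  have hlog2 : 1 / 2 ≤ log 2 := by linarith [log_two_gt_d9]
  have hlogk : log 2 ≤ log k := log_le_log (by norm_num) hk
  set a := u ^ 2 / (8 * s * log k) with ha
  rw [← exp_add]
  by_cases ha1 : a ≤ 1
  · exact (min_le_left _ _).trans (one_le_exp (by linarith))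
  refine (min_le_right _ _).trans ?_
  have hexp : k * (2 * exp (-u ^ 2 / (2 * s))) = exp (log k + log 2 - 4 * a * log k) := by
    have h4a : 4 * a * log k = u ^ 2 / (2 * s) := by
      rw [ha]
      field_simp [(by linarith : log k ≠ 0)]
      ring
    rw [h4a, sub_eq_add_neg, exp_add, exp_add, exp_log (by linarith), exp_log two_pos, neg_div]
    ring
  rw [hexp, exp_le_exp]
  -- `(2 - 4a) log k ≤ (2 - 4a) / 2 ≤ 1 - a`, as `2 - 4a < 0` and `log k ≥ log 2 ≥ 1/2`
  nlinarith

/-- **Sub-Gaussian norm of the greedily selected Gaussian context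
(Lemma 2, sub-Gaussian part).**
For i.i.d. contexts `x 1, …, x k` whose coordinates are i.i.d. `N(0, σ²)`, a
fixed nonzero `θ`, and `J` the a.s. unique index maximizing `⟨x i, θ⟩`, the
selected context `z = x J` satisfies, for every unit vector `w` and `u ≥ 0`,
`P(|⟨z, w⟩| ≥ u) ≤ e · exp(−u² / (c₂ σ² log k))`; i.e. `z` is sub-Gaussian
with norm at most `c σ √(log k)`. -/
theorem greedy_gaussian_context_subgaussian :
    ∃ c₂ : ℝ, 0 < c₂ ∧
      ∀ (p k : ℕ) (hp : 1 ≤ p) (hk : 2 ≤ k) (σ : ℝ), 0 < σ →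
        ∀ (Ω : Type) (_ : MeasurableSpace Ω) (P : Measure Ω),
          IsProbabilityMeasure P →
          ∀ x : Fin k → Ω → Fin p → ℝ,
            iIndepFun
              (fun (q : Fin k × Fin p) ω => x q.1 ω q.2) P →
            (∀ (i : Fin k) (j : Fin p),
              P.map (fun ω => x i ω j) = gaussianReal 0 ⟨σ ^ 2, sq_nonneg σ⟩) →
            ∀ θ : Fin p → ℝ, θ ≠ 0 →
              ∀ J : Ω → Fin k, Measurable J →
                (∀ᵐ ω ∂P, ∀ i : Fin k, i ≠ J ω →
                  (∑ j, x i ω j * θ j) < ∑ j, x (J ω) ω j * θ j) →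
                ∀ w : Fin p → ℝ, (∑ j, w j ^ 2) = 1 →
                  ∀ u : ℝ, 0 ≤ u →
                    P {ω : Ω | u ≤ |∑ j, x (J ω) ω j * w j|}
                      ≤ ENNReal.ofReal
                          (Real.exp 1 *
                            Real.exp (-(u ^ 2 / (c₂ * σ ^ 2 * Real.log k)))) := by
  refine ⟨8, by norm_num, ?_⟩
  intro p k _ hk σ hσ Ω _ P _ x hindep hmap _ _ J _ _ w hw u hu
  have hsubG (i : Fin k) :
      HasSubgaussianMGF (fun ω ↦ ∑ j, x i ω j * w j) ⟨σ ^ 2, sq_nonneg σ⟩ P :=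
    HasSubgaussianMGF.sum_mul_of_iIndepFun (hindep.precomp (Prod.mk_right_injective i))
      (fun j ↦ hasSubgaussianMGF_of_map_eq_gaussianReal (hmap i j)) hw
  have htail : P.real {ω | u ≤ |∑ j, x (J ω) ω j * w j|}
      ≤ min 1 (k * (2 * exp (-u ^ 2 / (2 * σ ^ 2)))) := by
    refine le_min measureReal_le_one ?_
    calc _ ≤ ∑ i, P.real {ω | u ≤ |∑ j, x i ω j * w j|} := measureReal_setOf_index_le_sum _ J
      _ ≤ ∑ _i : Fin k, 2 * exp (-u ^ 2 / (2 * σ ^ 2)) :=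
          sum_le_sum fun i _ ↦ (hsubG i).measureReal_abs_ge_le hu
      _ = k * (2 * exp (-u ^ 2 / (2 * σ ^ 2))) := by simp
  rw [ENNReal.le_ofReal_iff_toReal_le (measure_ne_top _ _) (by positivity)]
  exact htail.trans (min_one_mul_two_mul_exp_le (by exact_mod_cast hk) (by positivity))
end
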